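/- Let h ≤ 0 on V with h not identically zero. Then for every c < 0 the equation Δ_p u = c - h e^u has a solution u : V → ℝ. -/

import Mathlib

/-!
Solutions are minimisers of the functional
`J u = (1/p) Σ_{x∼y} ω_{xy} |u y - u x|^p + Σ_x μ_x (c u x - h x e^{u x})`,
whose Euler–Lagrange equation is `Δ_p u = c - h e^u` (summation by parts, using the symmetry of
`A` and `ω`). `J` is continuous, so it suffices that it is coercive. Fix `x₀` with `h x₀ < 0`
and write `u = u x₀ + v`. On a connected graph the gradient term controls `‖v‖^p` (Poincaré
inequality, by compactness of the unit sphere of `{v | v x₀ = 0}` and homogeneity), which beats the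
at most linear term `c Σ μ u`; and `-h x₀ μ x₀ e^{u x₀} - c (Σ μ) u x₀` grows like `|u x₀|`
in both directions because `c < 0`. Hence `J u ≥ K ‖u‖ - C` with `K > 0`.
-/

open Finset Real

/-- The discrete `p`-Laplacian on a weighted graph with adjacency `A`,
edge weights `ω` and vertex measure `μ`:
`(Δ_p f)_i = (1/μ_i) Σ_{j ∼ i} ω_{ij} |f_j - f_i|^{p-2} (f_j - f_i)`. -/
noncomputable def pLap {V : Type*} [Fintype V] (p : ℝ) (A : V → V → Prop) [DecidableRel A]
    (ω : V → V → ℝ) (μ : V → ℝ) (f : V → ℝ) : V → ℝ :=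
  fun i => (1 / μ i) * ∑ j, if A i j then ω i j * |f j - f i| ^ (p - 2) * (f j - f i) else 0

/-- Sum of a symmetric function `g` over the (unordered) edges of the graph:
`Σ_{i∼j} g_{ij} = (1/2) Σ_i Σ_{j : A i j} g i j`. -/
noncomputable def edgeSum {V : Type*} [Fintype V] (A : V → V → Prop) [DecidableRel A]
    (g : V → V → ℝ) : ℝ :=
  (1 / 2) * ∑ i, ∑ j, if A i j then g i j else 0

open Filter

theorem exists_mul_le_mul_rpow_add {p a : ℝ} (hp : 1 < p) (ha : 0 < a) (L : ℝ) :
    ∃ C, ∀ x, 0 ≤ x → L * x ≤ a * x ^ p + C := by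
  set δ := (a * p) ^ p⁻¹
  have hδ : 0 < δ := by positivity
  set q := p.conjExponent
  refine ⟨(|L| / δ) ^ q / q, fun x hx => ?_⟩
  calc L * x ≤ |L| * x := mul_le_mul_of_nonneg_right (le_abs_self L) hx
    _ = δ * x * (|L| / δ) := by field_simp
    _ ≤ (δ * x) ^ p / p + (|L| / δ) ^ q / q :=
        young_inequality_of_nonneg (by positivity) (by positivity) (.conjExponent hp)
    _ = a * x ^ p + (|L| / δ) ^ q / q := by
        rw [mul_rpow hδ.le hx, rpow_inv_rpow (by positivity) (by positivity)]
        field_simp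

theorem exists_mul_abs_le_mul_exp_sub_mul {β K : ℝ} (hβ : 0 < β) :
    ∃ C, ∀ x, K * |x| ≤ β * exp x - K * x + C := by
  refine ⟨2 * K ^ 2 / β, fun x => ?_⟩
  have hC : 0 ≤ 2 * K ^ 2 / β := by positivity
  rcases le_total x 0 with hx | hx
  · rw [abs_of_nonpos hx]
    nlinarith [exp_pos x]
  · rw [abs_of_nonneg hx]
    have hexp : β * (x ^ 2 / 2) ≤ β * exp x :=
      mul_le_mul_of_nonneg_left (by nlinarith [quadratic_le_exp_of_nonneg hx]) hβ.le
    have hsq : 0 ≤ (β * x - 2 * K) ^ 2 / (2 * β) := by positivity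
    have : (β * x - 2 * K) ^ 2 / (2 * β) = β * (x ^ 2 / 2) - 2 * K * x + 2 * K ^ 2 / β := by
      field_simp; ring
    linarith

theorem exists_pos_mul_norm_rpow_le_of_homogeneous {E : Type*} [NormedAddCommGroup E]
    [NormedSpace ℝ E] [FiniteDimensional ℝ E] {F : E → ℝ} (hF : Continuous F) {p : ℝ}
    (hp : 0 < p) (hhom : ∀ (t : ℝ) (v : E), 0 ≤ t → F (t • v) = t ^ p * F v)
    (S : Submodule ℝ E) (hpos : ∀ v ∈ S, v ≠ 0 → 0 < F v) :
    ∃ ε > 0, ∀ v ∈ S, ε * ‖v‖ ^ p ≤ F v := by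
  have hcpt : IsCompact (Metric.sphere (0 : E) 1 ∩ S) :=
    (isCompact_sphere 0 1).inter_right S.closed_of_finiteDimensional
  obtain ⟨ε, hε, hεF⟩ := hcpt.exists_forall_le' hF.continuousOn (a := 0)
    fun w hw => hpos w hw.2 (ne_zero_of_mem_unit_sphere ⟨w, hw.1⟩)
  refine ⟨ε, hε, fun v hv => ?_⟩
  rcases eq_or_ne v 0 with rfl | hv0
  · have hF0 := hhom 0 0 le_rfl
    rw [zero_smul, zero_rpow hp.ne', zero_mul] at hF0
    rw [norm_zero, zero_rpow hp.ne', mul_zero, hF0]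
  · have hn : 0 < ‖v‖ := norm_pos_iff.2 hv0
    have hw : ‖v‖⁻¹ • v ∈ Metric.sphere (0 : E) 1 ∩ S :=
      ⟨by simp [norm_smul, hn.ne'], S.smul_mem _ hv⟩
    calc ε * ‖v‖ ^ p ≤ F (‖v‖⁻¹ • v) * ‖v‖ ^ p := by gcongr; exact hεF _ hw
      _ = F v := by rw [mul_comm, ← hhom _ _ hn.le, smul_inv_smul₀ hn.ne']

section Graph

variable {V : Type*} [Fintype V] {A : V → V → Prop} [DecidableRel A]

theorem edgeSum_nonneg {g : V → V → ℝ} (hg : ∀ k l, A k l → 0 ≤ g k l) : 0 ≤ edgeSum A g := by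
  unfold edgeSum
  refine mul_nonneg (by norm_num) (sum_nonneg fun k _ => sum_nonneg fun l _ => ?_)
  split_ifs with hkl
  exacts [hg k l hkl, le_rfl]

theorem edgeSum_eq_zero_iff {g : V → V → ℝ} (hg : ∀ k l, A k l → 0 ≤ g k l) :
    edgeSum A g = 0 ↔ ∀ k l, A k l → g k l = 0 := by
  have hterm : ∀ k l, 0 ≤ if A k l then g k l else 0 := fun k l => by
    split_ifs with hkl
    exacts [hg k l hkl, le_rfl]
  simp only [edgeSum, one_div, mul_eq_zero, inv_eq_zero, OfNat.ofNat_ne_zero, false_or]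
  rw [sum_eq_zero_iff_of_nonneg fun k _ => sum_nonneg fun l _ => hterm k l]
  simp only [mem_univ, forall_const, sum_eq_zero_iff_of_nonneg fun l _ => hterm _ l]
  exact forall₂_congr fun k l => by by_cases hkl : A k l <;> simp [hkl]

theorem HasDerivAt.edgeSum {g : V → V → ℝ → ℝ} {g' : V → V → ℝ} {t : ℝ}
    (hg : ∀ k l, A k l → HasDerivAt (g k l) (g' k l) t) :
    HasDerivAt (fun s => edgeSum A fun k l => g k l s) (edgeSum A g') t := by
  refine (HasDerivAt.fun_sum fun k _ => HasDerivAt.fun_sum fun l _ => ?_).const_mul (1 / 2)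
  by_cases hkl : A k l
  · simpa only [hkl, if_true] using hg k l hkl
  · simpa only [hkl, if_false] using hasDerivAt_const t (0 : ℝ)

theorem mul_edgeSum (a : ℝ) (g : V → V → ℝ) :
    a * edgeSum A g = edgeSum A fun k l => a * g k l := by
  rw [edgeSum, edgeSum, mul_left_comm]
  simp only [mul_sum, mul_ite, mul_zero]

theorem edgeSum_mul_sub_of_antisymm (hA : Symmetric A) {g : V → V → ℝ}
    (hg : ∀ k l, A k l → g l k = -g k l) (e : V → ℝ) :
    edgeSum A (fun k l => g k l * (e l - e k)) = -∑ k, (∑ l, if A k l then g k l else 0) * e k := by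
  have hswap : (∑ k, ∑ l, if A k l then g k l * e l else 0) =
      -∑ k, ∑ l, if A k l then g k l * e k else 0 := by
    rw [sum_comm, ← sum_neg_distrib]
    refine sum_congr rfl fun k _ => ?_
    rw [← sum_neg_distrib]
    refine sum_congr rfl fun l _ => ?_
    by_cases hkl : A k l
    · rw [if_pos (hA hkl), if_pos hkl, hg k l hkl, neg_mul]
    · rw [if_neg (fun h => hkl (hA h)), if_neg hkl, neg_zero]
  have hsplit : ∀ k l, (if A k l then g k l * (e l - e k) else 0) =
      (if A k l then g k l * e l else 0) - if A k l then g k l * e k else 0 := fun k l => by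
    split_ifs <;> ring
  simp only [edgeSum, hsplit, sum_sub_distrib, hswap, sum_mul, ite_mul, zero_mul]
  ring

end Graph

section PEnergy

variable {V : Type*}

noncomputable def pFlux (p : ℝ) (ω : V → V → ℝ) (f : V → ℝ) (k l : V) : ℝ :=
  ω k l * |f l - f k| ^ (p - 2) * (f l - f k)

theorem pFlux_swap {p : ℝ} {ω : V → V → ℝ} (hω : ∀ k l, ω k l = ω l k) (f : V → ℝ) (k l : V) :
    pFlux p ω f l k = -pFlux p ω f k l := by
  simp only [pFlux, hω l k, abs_sub_comm (f k) (f l)]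
  ring

variable [Fintype V]

noncomputable def pEnergy (p : ℝ) (A : V → V → Prop) [DecidableRel A] (ω : V → V → ℝ)
    (f : V → ℝ) : ℝ :=
  edgeSum A fun k l => ω k l * |f l - f k| ^ p

variable {A : V → V → Prop} [DecidableRel A] {p : ℝ} {ω : V → V → ℝ}

theorem pEnergy_nonneg (hω : ∀ k l, A k l → 0 ≤ ω k l) (f : V → ℝ) : 0 ≤ pEnergy p A ω f :=
  edgeSum_nonneg fun k l hkl => mul_nonneg (hω k l hkl) (rpow_nonneg (abs_nonneg _) p)

theorem pEnergy_eq_zero_iff (hp : p ≠ 0) (hω : ∀ k l, A k l → 0 < ω k l) {f : V → ℝ} :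
    pEnergy p A ω f = 0 ↔ ∀ k l, A k l → f k = f l := by
  rw [pEnergy, edgeSum_eq_zero_iff fun k l hkl =>
    mul_nonneg (hω k l hkl).le (rpow_nonneg (abs_nonneg _) p)]
  refine forall₃_congr fun k l hkl => ?_
  rw [mul_eq_zero, rpow_eq_zero (abs_nonneg _) hp, abs_eq_zero, sub_eq_zero,
    or_iff_right (hω k l hkl).ne', eq_comm]

theorem continuous_pEnergy (hp : 0 ≤ p) : Continuous (pEnergy p A ω) := by
  refine continuous_const.mul (continuous_finsetSum _ fun k _ =>
    continuous_finsetSum _ fun l _ => ?_)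
  split_ifs
  · exact continuous_const.mul
      ((((continuous_apply l).sub (continuous_apply k)).abs).rpow_const fun _ => Or.inr hp)
  · exact continuous_const

theorem pEnergy_smul (t : ℝ) (f : V → ℝ) : pEnergy p A ω (t • f) = |t| ^ p * pEnergy p A ω f := by
  simp only [pEnergy, mul_edgeSum, Pi.smul_apply, smul_eq_mul, ← mul_sub, abs_mul,
    mul_rpow (abs_nonneg t) (abs_nonneg _)]
  congr 1
  ext k l
  ring

theorem pEnergy_sub_const (f : V → ℝ) (a : ℝ) :
    pEnergy p A ω (f - Function.const V a) = pEnergy p A ω f := by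
  simp only [pEnergy, Pi.sub_apply, Function.const_apply, sub_sub_sub_cancel_right]

theorem exists_pos_mul_norm_rpow_le_pEnergy (hp : 0 < p) (hω : ∀ k l, A k l → 0 < ω k l)
    (hconn : ∀ i j : V, Relation.ReflTransGen A i j) (i₀ : V) :
    ∃ ε > 0, ∀ f : V → ℝ, ε * ‖f - Function.const V (f i₀)‖ ^ p ≤ pEnergy p A ω f := by
  set S := LinearMap.ker (LinearMap.proj i₀ : (V → ℝ) →ₗ[ℝ] ℝ)
  have hpos : ∀ v ∈ S, v ≠ 0 → 0 < pEnergy p A ω v := by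
    intro v hv hv0
    refine (pEnergy_nonneg (fun k l hkl => (hω k l hkl).le) v).lt_of_ne' fun hE => hv0 ?_
    have hconst := (pEnergy_eq_zero_iff hp.ne' hω).1 hE
    funext j
    have hv₀ : v i₀ = 0 := hv
    induction hconn i₀ j with
    | refl => exact hv₀
    | tail _ hkl ih => exact (hconst _ _ hkl).symm.trans ih
  obtain ⟨ε, hε, hεE⟩ := exists_pos_mul_norm_rpow_le_of_homogeneous (continuous_pEnergy hp.le)
    hp (fun t v ht => by rw [pEnergy_smul, abs_of_nonneg ht]) S hpos
  refine ⟨ε, hε, fun f => ?_⟩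
  rw [← pEnergy_sub_const f (f i₀)]
  exact hεE _ (by simp [S])

theorem hasDerivAt_pEnergy_add_smul (hp : 1 < p) (u e : V → ℝ) :
    HasDerivAt (fun t : ℝ => pEnergy p A ω (u + t • e))
      (p * edgeSum A fun k l => pFlux p ω u k l * (e l - e k)) 0 := by
  rw [mul_edgeSum]
  refine HasDerivAt.edgeSum fun k l _ => ?_
  have hline : HasDerivAt (fun t : ℝ => u l - u k + t * (e l - e k)) (e l - e k) 0 := by
    simpa using ((hasDerivAt_id (0 : ℝ)).mul_const (e l - e k)).const_add (u l - u k)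
  have hfun : (fun t : ℝ => ω k l * |(u + t • e) l - (u + t • e) k| ^ p) =
      fun t => ω k l * |u l - u k + t * (e l - e k)| ^ p := by
    funext t
    simp only [Pi.add_apply, Pi.smul_apply, smul_eq_mul]
    ring_nf
  rw [hfun]
  refine (((hasDerivAt_abs_rpow (u l - u k) hp).comp_of_eq 0 hline (by simp)).const_mul
    (ω k l)).congr_deriv ?_
  simp only [pFlux]
  ring

theorem sum_pFlux_eq_mul_pLap {μ : V → ℝ} (f : V → ℝ) {k : V} (hμ : μ k ≠ 0) :
    ∑ l, (if A k l then pFlux p ω f k l else 0) = μ k * pLap p A ω μ f k := by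
  simp only [pLap, pFlux]
  field_simp

end PEnergy

section KazdanWarner

variable {V : Type*} [Fintype V]

noncomputable def kazdanWarnerFunctional (p : ℝ) (A : V → V → Prop) [DecidableRel A]
    (ω : V → V → ℝ) (μ h : V → ℝ) (c : ℝ) (u : V → ℝ) : ℝ :=
  pEnergy p A ω u / p + ∑ k, μ k * (c * u k - h k * exp (u k))

variable {A : V → V → Prop} [DecidableRel A] {p c : ℝ} {ω : V → V → ℝ} {μ h : V → ℝ}

theorem continuous_kazdanWarnerFunctional (hp : 0 ≤ p) :
    Continuous (kazdanWarnerFunctional p A ω μ h c) :=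
  ((continuous_pEnergy hp).div_const p).add (continuous_finsetSum _ fun k _ =>
    continuous_const.mul ((continuous_const.mul (continuous_apply k)).sub
      (continuous_const.mul (continuous_apply k).rexp)))

theorem hasDerivAt_kazdanWarnerFunctional_add_smul (hp : 1 < p) (hA : Symmetric A)
    (hω : ∀ k l, ω k l = ω l k) (hμ : ∀ k, μ k ≠ 0) (u e : V → ℝ) :
    HasDerivAt (fun t : ℝ => kazdanWarnerFunctional p A ω μ h c (u + t • e))
      (∑ k, μ k * (c - h k * exp (u k) - pLap p A ω μ u k) * e k) 0 := by
  have hpot : HasDerivAt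
      (fun t : ℝ => ∑ k, μ k * (c * (u + t • e) k - h k * exp ((u + t • e) k)))
      (∑ k, μ k * (c - h k * exp (u k)) * e k) 0 := by
    refine HasDerivAt.fun_sum fun k _ => ?_
    have hline : HasDerivAt (fun t : ℝ => (u + t • e) k) (e k) 0 := by
      simpa using ((hasDerivAt_id (0 : ℝ)).mul_const (e k)).const_add (u k)
    refine (((hline.const_mul c).sub (hline.exp.const_mul (h k))).const_mul (μ k)).congr_deriv ?_
    simp only [Pi.add_apply, Pi.smul_apply, smul_eq_mul, zero_mul, add_zero]
    ring
  have henergy := (hasDerivAt_pEnergy_add_smul (A := A) (ω := ω) hp u e).div_const p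
  rw [edgeSum_mul_sub_of_antisymm hA (fun k l _ => pFlux_swap hω u k l) e] at henergy
  simp only [sum_pFlux_eq_mul_pLap u (hμ _)] at henergy
  refine (henergy.add hpot).congr_deriv ?_
  rw [mul_div_cancel_left₀ _ (by linarith), ← sum_neg_distrib, ← sum_add_distrib]
  exact sum_congr rfl fun k _ => by ring

theorem pLap_eq_of_forall_le (hp : 1 < p) (hA : Symmetric A) (hω : ∀ k l, ω k l = ω l k)
    (hμ : ∀ k, μ k ≠ 0) {u : V → ℝ}
    (hu : ∀ v, kazdanWarnerFunctional p A ω μ h c u ≤ kazdanWarnerFunctional p A ω μ h c v)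
    (i : V) : pLap p A ω μ u i = c - h i * exp (u i) := by
  classical
  have hmin : IsLocalMin
      (fun t : ℝ => kazdanWarnerFunctional p A ω μ h c (u + t • Pi.single i 1)) 0 :=
    .of_forall fun t => by simpa using hu _
  have h0 := hmin.hasDerivAt_eq_zero (hasDerivAt_kazdanWarnerFunctional_add_smul hp hA hω hμ u _)
  simp only [Pi.single_apply, mul_ite, mul_one, mul_zero, sum_ite_eq', mem_univ, if_true] at h0
  linarith [(mul_eq_zero.1 h0).resolve_left (hμ i)]

theorem kazdanWarnerFunctional_ge (hp : 0 < p) (hμ : ∀ k, 0 < μ k) (hh : ∀ k, h k ≤ 0)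
    (hc : c ≤ 0) {ε : ℝ} {i₀ : V}
    (hε : ∀ f : V → ℝ, ε * ‖f - Function.const V (f i₀)‖ ^ p ≤ pEnergy p A ω f) (u : V → ℝ) :
    ε / p * ‖u - Function.const V (u i₀)‖ ^ p
        + c * (∑ k, μ k) * (u i₀ + ‖u - Function.const V (u i₀)‖)
        + μ i₀ * -h i₀ * exp (u i₀) ≤ kazdanWarnerFunctional p A ω μ h c u := by
  set D := ‖u - Function.const V (u i₀)‖
  have hupper : ∀ k, u k ≤ u i₀ + D := fun k => by
    have := (le_abs_self _).trans (norm_le_pi_norm (u - Function.const V (u i₀)) k)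
    simp only [Pi.sub_apply, Function.const_apply] at this
    linarith
  have hlin : c * (∑ k, μ k) * (u i₀ + D) ≤ ∑ k, μ k * (c * u k) := by
    rw [mul_comm c, sum_mul, sum_mul]
    exact sum_le_sum fun k _ => by
      rw [mul_assoc]
      exact mul_le_mul_of_nonneg_left (mul_le_mul_of_nonpos_left (hupper k) hc) (hμ k).le
  have hexp : μ i₀ * -h i₀ * exp (u i₀) ≤ ∑ k, μ k * (-h k * exp (u k)) := by
    rw [mul_assoc]
    exact single_le_sum (f := fun k => μ k * (-h k * exp (u k)))
      (fun k _ => mul_nonneg (hμ k).le (mul_nonneg (neg_nonneg.2 (hh k)) (exp_pos _).le))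
      (mem_univ i₀)
  have henergy : ε / p * D ^ p ≤ pEnergy p A ω u / p := by
    rw [div_mul_eq_mul_div]
    exact div_le_div_of_nonneg_right (hε u) hp.le
  have hsplit : kazdanWarnerFunctional p A ω μ h c u =
      pEnergy p A ω u / p + ∑ k, μ k * (c * u k) + ∑ k, μ k * (-h k * exp (u k)) := by
    rw [kazdanWarnerFunctional, add_assoc, ← sum_add_distrib]
    congr 1
    exact sum_congr rfl fun k _ => by ring
  linarith

theorem tendsto_kazdanWarnerFunctional_cocompact (hp : 1 < p) (hω : ∀ k l, A k l → 0 < ω k l)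
    (hconn : ∀ i j : V, Relation.ReflTransGen A i j) (hμ : ∀ k, 0 < μ k) (hh : ∀ k, h k ≤ 0)
    {i₀ : V} (hi₀ : h i₀ < 0) (hc : c < 0) :
    Tendsto (kazdanWarnerFunctional p A ω μ h c) (cocompact (V → ℝ)) atTop := by
  obtain ⟨ε, hε, hεE⟩ := exists_pos_mul_norm_rpow_le_pEnergy (p := p) (by linarith) hω hconn i₀
  set K := -c * ∑ k, μ k with hK_def
  have hK : 0 < K := mul_pos (by linarith) (sum_pos (fun k _ => hμ k) ⟨i₀, mem_univ _⟩)
  obtain ⟨C₁, hC₁⟩ := exists_mul_le_mul_rpow_add hp (div_pos hε (by linarith : (0 : ℝ) < p)) (2 * K)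
  obtain ⟨C₂, hC₂⟩ := exists_mul_abs_le_mul_exp_sub_mul (K := K) (mul_pos (hμ i₀) (neg_pos.2 hi₀))
  have hbound : ∀ u, K * ‖u‖ + -(C₁ + C₂) ≤ kazdanWarnerFunctional p A ω μ h c u := by
    intro u
    set D := ‖u - Function.const V (u i₀)‖
    have hnorm : ‖u‖ ≤ |u i₀| + D := calc
      ‖u‖ = ‖Function.const V (u i₀) + (u - Function.const V (u i₀))‖ := by
        rw [add_sub_cancel]
      _ ≤ |u i₀| + D := (norm_add_le _ _).trans (add_le_add_left (pi_norm_const_le _) _)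
    have hlin : c * (∑ k, μ k) * (u i₀ + D) = -K * u i₀ - K * D := by rw [hK_def]; ring
    nlinarith [kazdanWarnerFunctional_ge (by linarith) hμ hh hc.le hεE u, hC₁ D (norm_nonneg _),
      hC₂ (u i₀), mul_le_mul_of_nonneg_left hnorm hK.le]
  exact tendsto_atTop_mono hbound (tendsto_atTop_add_const_right _ _
    (tendsto_norm_cocompact_atTop.const_mul_atTop hK))

end KazdanWarner

theorem stmt18_general {V : Type*} [Fintype V] (p : ℝ) (hp : 1 < p)
    (A : V → V → Prop) [DecidableRel A] (hA : Symmetric A)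
    (ω : V → V → ℝ) (hωsymm : ∀ i j, ω i j = ω j i) (hωpos : ∀ i j, A i j → 0 < ω i j)
    (μ : V → ℝ) (hμ : ∀ i, 0 < μ i)
    (hconn : ∀ i j : V, Relation.ReflTransGen A i j) (h : V → ℝ) (hle : ∀ i, h i ≤ 0) (hne : ∃ i, h i ≠ 0)
    (c : ℝ) (hc : c < 0) :
    ∃ u : V → ℝ, ∀ i, pLap p A ω μ u i = c - h i * Real.exp (u i) := by
  obtain ⟨i₀, hi₀⟩ := hne
  obtain ⟨u, hu⟩ := (continuous_kazdanWarnerFunctional (A := A) (ω := ω) (μ := μ) (h := h)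
    (c := c) (by linarith)).exists_forall_le
    (tendsto_kazdanWarnerFunctional_cocompact hp hωpos hconn hμ hle ((hle i₀).lt_of_ne hi₀) hc)
  exact ⟨u, pLap_eq_of_forall_le hp hA hωsymm (fun k => (hμ k).ne') hu⟩

/-- if `h ≤ 0`, `h ≢ 0`, then `Δ_p u = c - h e^u` is solvable for every `c < 0`. -/
theorem stmt18 {V : Type*} [Fintype V] [Nonempty V] (p : ℝ) (hp : 1 < p)
    (A : V → V → Prop) [DecidableRel A] (hA : Symmetric A)
    (ω : V → V → ℝ) (hωsymm : ∀ i j, ω i j = ω j i) (hωpos : ∀ i j, A i j → 0 < ω i j)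
    (μ : V → ℝ) (hμ : ∀ i, 0 < μ i)
    (hconn : ∀ i j : V, Relation.ReflTransGen A i j) (h : V → ℝ) (hle : ∀ i, h i ≤ 0) (hne : ∃ i, h i ≠ 0)
    (c : ℝ) (hc : c < 0) :
    ∃ u : V → ℝ, ∀ i, pLap p A ω μ u i = c - h i * Real.exp (u i) :=
  stmt18_general p hp A hA ω hωsymm hωpos μ hμ hconn h hle hne c hc
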